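/- Let ψ be a bounded complexity measure and A a nonempty closed class of decision tables. If both S_ψ and N are bounded from above on A (say S_ψ(T) ≤ a and N(T) ≤ b for all T ∈ A), then for every table T ∈ A, ψ^d(T) ≤ 2a·log₂ b; in particular both F^W_{ψ,A} and F^Θ_{ψ,A} are bounded by the constant 2a·log₂ b. -/

import Mathlib

/- Decision tables over E_{k+2} = {0, ..., k+1}, following Ostonov & Moshkov,
"Deterministic and Strongly Nondeterministic Decision Trees for Decision Tables
from Closed Classes".  Columns are labeled with attributes (natural numbers),
rows are functions supported on the attribute set, decisions are Booleans. -/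

namespace ClosedClasses

/-- A decision table with 0-1-decisions over `E_{k+2}`. Rows are pairwise
different (they form a `Finset`) and vanish outside the attribute set. -/
structure Table (k : ℕ) where
  attrs : Finset ℕ
  rows : Finset (ℕ → Fin (k + 2))
  dec : (ℕ → Fin (k + 2)) → Bool
  supp : ∀ r ∈ rows, ∀ a ∉ attrs, r a = 0

namespace Table

variable {k : ℕ}

/-- Number of columns. -/
def W (T : Table k) : ℕ := T.attrs.card

/-- Number of rows. -/
def N (T : Table k) : ℕ := T.rows.card

/-- All rows carry the same decision. -/
def ConstDec (T : Table k) : Prop :=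
  ∀ r ∈ T.rows, ∀ r' ∈ T.rows, T.dec r = T.dec r'

/-- `D` separates the row `r` from all other rows of `T`. -/
def Separates (T : Table k) (D : Finset ℕ) (r : ℕ → Fin (k + 2)) : Prop :=
  D ⊆ T.attrs ∧ ∀ r' ∈ T.rows, r' ≠ r → ∃ a ∈ D, r a ≠ r' a

/-- `S(T, r)`: minimum cardinality of a separating set for row `r`. -/
noncomputable def Srow (T : Table k) (r : ℕ → Fin (k + 2)) : ℕ :=
  sInf {m | ∃ D : Finset ℕ, T.Separates D r ∧ D.card = m}

/-- `S(T)`: maximum over rows of `S(T, r)`. -/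
noncomputable def S (T : Table k) : ℕ :=
  sSup {m | ∃ r ∈ T.rows, T.Srow r = m}

/-- A test of `T`: a set of columns distinguishing rows with different decisions. -/
def IsTest (T : Table k) (D : Finset ℕ) : Prop :=
  D ⊆ T.attrs ∧
    ∀ r ∈ T.rows, ∀ r' ∈ T.rows, T.dec r ≠ T.dec r' → ∃ a ∈ D, r a ≠ r' a

/-- `Θ(T)`: minimum cardinality of a test of `T`. -/
noncomputable def theta (T : Table k) : ℕ :=
  sInf {m | ∃ D : Finset ℕ, T.IsTest D ∧ D.card = m}

end Table

/-- `(k+2)`-decision trees: leaves carry decisions, internal nodes query an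
attribute and branch on its `k+2` possible values. -/
inductive DT (k : ℕ) where
  | leaf : Bool → DT k
  | node : ℕ → (Fin (k + 2) → DT k) → DT k

namespace DT

variable {k : ℕ}

/-- Deterministic evaluation of a tree on a row. -/
def eval : DT k → (ℕ → Fin (k + 2)) → Bool
  | leaf b, _ => b
  | node a ch, r => eval (ch (r a)) r

/-- Depth: maximum number of queries along a complete path. -/
def depth : DT k → ℕ
  | leaf _ => 0
  | node _ ch => 1 + Finset.univ.sup fun i => (ch i).depth

/-- The set `P(Γ)` of attributes queried in the tree. -/
def attrSet : DT k → Finset ℕ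
  | leaf _ => ∅
  | node a ch => insert a (Finset.univ.biUnion fun i => (ch i).attrSet)

/-- `ψ`-cost: maximum over complete paths of `ψ` of the word of queried
attributes (the accumulator `w` holds attributes already queried). -/
def cost (ψ : List ℕ → ℕ) : DT k → List ℕ → ℕ
  | leaf _, w => ψ w
  | node a ch, w => Finset.univ.sup fun i => cost ψ (ch i) (a :: w)

end DT

/-- `Γ` is a deterministic decision tree for the table `T`. -/
def IsDT {k : ℕ} (T : Table k) (Γ : DT k) : Prop :=
  Γ.attrSet ⊆ T.attrs ∧ ∀ r ∈ T.rows, Γ.eval r = T.dec r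

/-- `h^d(T)`: minimum depth of a deterministic decision tree for `T`. -/
noncomputable def hd {k : ℕ} (T : Table k) : ℕ :=
  sInf {m | ∃ Γ : DT k, IsDT T Γ ∧ Γ.depth = m}

/-- `ψ^d(T)`: minimum `ψ`-complexity of a deterministic decision tree for `T`. -/
noncomputable def psid {k : ℕ} (ψ : List ℕ → ℕ) (T : Table k) : ℕ :=
  sInf {m | ∃ Γ : DT k, IsDT T Γ ∧ Γ.cost ψ [] = m}

/-- A row satisfies a rule (a conjunction of equations `attribute = value`). -/
def RuleSat {k : ℕ} (rule : List (ℕ × Fin (k + 2))) (r : ℕ → Fin (k + 2)) : Prop :=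
  ∀ p ∈ rule, r p.1 = p.2

/-- A strongly nondeterministic decision tree for `T`, represented by the set of
words of its complete paths (rules): every rule uses attributes of `T`, each
row with decision 1 satisfies some rule, and each rule is consistent only with
rows carrying decision 1. -/
def IsSNDT {k : ℕ} (T : Table k) (R : Finset (List (ℕ × Fin (k + 2)))) : Prop :=
  (∀ rule ∈ R, ∀ p ∈ rule, p.1 ∈ T.attrs) ∧
  (∀ r ∈ T.rows, T.dec r = true → ∃ rule ∈ R, RuleSat rule r) ∧
  (∀ rule ∈ R, ∀ r ∈ T.rows, RuleSat rule r → T.dec r = true)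

/-- `ψ^s(T)`: minimum `ψ`-complexity of a strongly nondeterministic decision
tree for `T`. -/
noncomputable def psis {k : ℕ} (ψ : List ℕ → ℕ) (T : Table k) : ℕ :=
  sInf {m | ∃ R, IsSNDT T R ∧ R.sup (fun rule => ψ (rule.map Prod.fst)) = m}

/-- `h^s(T)`: minimum depth of a strongly nondeterministic decision tree. -/
noncomputable def hs {k : ℕ} (T : Table k) : ℕ :=
  sInf {m | ∃ R, IsSNDT T R ∧ R.sup (fun rule => (rule.map Prod.fst).length) = m}

/-- A complexity measure on finite words over the alphabet `{f_i : i ∈ ω}`. -/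
structure CMeasure where
  ψ : List ℕ → ℕ
  pos : ∀ w, ψ w = 0 ↔ w = []
  perm : ∀ w w' : List ℕ, w.Perm w' → ψ w = ψ w'
  mono : ∀ w₁ w₂ : List ℕ, ψ w₁ ≤ ψ (w₁ ++ w₂)
  subadd : ∀ w₁ w₂ : List ℕ, ψ (w₁ ++ w₂) ≤ ψ w₁ + ψ w₂

/-- Bounded complexity measure: `ψ(α) ≥ |α|`. -/
def CMeasure.Bounded (ψ : CMeasure) : Prop := ∀ w : List ℕ, w.length ≤ ψ.ψ w

/-- Extension of a complexity measure to finite sets of attributes. -/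
def CMeasure.setCost (ψ : CMeasure) (D : Finset ℕ) : ℕ := ψ.ψ (D.sort (· ≤ ·))

namespace Table

variable {k : ℕ}

/-- `S_ψ(T, r)`: minimum `ψ`-complexity of a set separating `r` from the other rows. -/
noncomputable def Spsirow (ψ : CMeasure) (T : Table k) (r : ℕ → Fin (k + 2)) : ℕ :=
  sInf {m | ∃ D : Finset ℕ, T.Separates D r ∧ ψ.setCost D = m}

/-- `S_ψ(T)`: maximum over rows of `S_ψ(T, r)`. -/
noncomputable def Spsi (ψ : CMeasure) (T : Table k) : ℕ :=
  sSup {m | ∃ r ∈ T.rows, Spsirow ψ T r = m}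

/-- `Θ_ψ(T)`: minimum `ψ`-complexity of a test of `T`. -/
noncomputable def thetapsi (ψ : CMeasure) (T : Table k) : ℕ :=
  sInf {m | ∃ D : Finset ℕ, T.IsTest D ∧ ψ.setCost D = m}

/-- `W_ψ(T) = ψ(P(T))`. -/
def Wpsi (ψ : CMeasure) (T : Table k) : ℕ := ψ.setCost T.attrs

/-- `V_ψ(T) = max{ψ(f_i) : f_i ∈ P(T)}`. -/
noncomputable def Vpsi (ψ : CMeasure) (T : Table k) : ℕ :=
  sSup {m | ∃ a ∈ T.attrs, ψ.ψ [a] = m}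

end Table

/-- Restriction of a row to a set of attributes. -/
def restrict {k : ℕ} (A : Finset ℕ) (r : ℕ → Fin (k + 2)) : ℕ → Fin (k + 2) :=
  fun a => if a ∈ A then r a else 0

/-- `T'` belongs to the closure `[T]` of `T` under removal of columns and
changing of decisions: `T'` keeps a subset of the columns of `T`, its rows are
the restrictions of the rows of `T`, and its decisions are arbitrary. -/
def InClosure {k : ℕ} (T' T : Table k) : Prop :=
  T'.attrs ⊆ T.attrs ∧ (T'.rows : Set (ℕ → Fin (k + 2))) = restrict T'.attrs '' (T.rows : Set (ℕ → Fin (k + 2)))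

/-- A nonempty class of decision tables closed under removal of columns and
changing of decisions. -/
def ClosedClass {k : ℕ} (A : Set (Table k)) : Prop :=
  A.Nonempty ∧ ∀ T ∈ A, ∀ T' : Table k, InClosure T' T → T' ∈ A

/-- `Ŝ_ψ(T) = max{S_ψ(T') : T' ∈ [T]}`. -/
noncomputable def Shatpsi {k : ℕ} (ψ : CMeasure) (T : Table k) : ℕ :=
  sSup {m | ∃ T' : Table k, InClosure T' T ∧ T'.Spsi ψ = m}

/-- `Ŝ(T) = max{S(T') : T' ∈ [T]}`. -/
noncomputable def Shat {k : ℕ} (T : Table k) : ℕ :=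
  sSup {m | ∃ T' : Table k, InClosure T' T ∧ T'.S = m}

/-- Fixing the attributes of the word `p` to the listed values restricts `T`
to a subtable (possibly empty) in which all rows carry the same decision. -/
def FixConst {k : ℕ} (T : Table k) (p : List (ℕ × Fin (k + 2))) : Prop :=
  ∀ r ∈ T.rows, ∀ r' ∈ T.rows, RuleSat p r → RuleSat p r' → T.dec r = T.dec r'

/-- `M_ψ(T, δ)`: minimum `ψ`-value of a word of attributes of `T` whose
fixation to the values of `δ` yields a subtable with constant decisions. -/
noncomputable def Mpsirow {k : ℕ} (ψ : CMeasure) (T : Table k)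
    (δ : ℕ → Fin (k + 2)) : ℕ :=
  sInf {m | ∃ p : List (ℕ × Fin (k + 2)),
    (∀ q ∈ p, q.1 ∈ T.attrs ∧ q.2 = δ q.1) ∧ FixConst T p ∧
      ψ.ψ (p.map Prod.fst) = m}

/-- `M_ψ(T)`: maximum of `M_ψ(T, δ)` over all tuples `δ ∈ E_{k+2}^{W(T)}`. -/
noncomputable def Mpsi {k : ℕ} (ψ : CMeasure) (T : Table k) : ℕ :=
  sSup {m | ∃ δ : ℕ → Fin (k + 2), (∀ a ∉ T.attrs, δ a = 0) ∧ Mpsirow ψ T δ = m}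

/-- A critical table: for every column there are two rows differing exactly
in this column. -/
def Critical {k : ℕ} (T : Table k) : Prop :=
  T.rows.Nonempty ∧ ∀ a ∈ T.attrs, ∃ r ∈ T.rows, ∃ r' ∈ T.rows,
    r a ≠ r' a ∧ ∀ b : ℕ, b ≠ a → r b = r' b

/-- `H_D(n)`: the largest element of `D` not exceeding `n` (0 if none). -/
noncomputable def HD (D : Set ℕ) (n : ℕ) : ℕ := sSup (D ∩ Set.Iic n)

end ClosedClasses

open ClosedClasses

/-! Closedness gives `S_ψ(T') ≤ a` for every table `T'` obtained from `T` by removing columns;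
from this, for every tuple `δ` there is a word of cost `≤ 2a` fixing values of `δ` after which
all remaining rows share a decision. Querying such a word for the majority values of the current
rows, each deviation keeps at most half of the rows, so a path runs through at most `log₂ N(T)`
such words. -/

theorem Finset.exists_forall_ne_two_mul_card_filter_le {α β : Type*} [Fintype β] [Nonempty β]
    [DecidableEq β] (s : Finset α) (f : α → β) :
    ∃ v, ∀ u ≠ v, 2 * (s.filter (f · = u)).card ≤ s.card := by
  classical
  obtain ⟨v, -, hv⟩ := Finset.univ.exists_max_image (fun u => (s.filter (f · = u)).card)
    Finset.univ_nonempty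
  refine ⟨v, fun u hu => ?_⟩
  have hdisj : Disjoint (s.filter (f · = u)) (s.filter (f · = v)) :=
    Finset.disjoint_filter.mpr fun _ _ h h' => hu (h.symm.trans h')
  have := Finset.card_le_card (Finset.union_subset (s.filter_subset (f · = u))
    (s.filter_subset (f · = v)))
  rw [Finset.card_union_of_disjoint hdisj] at this
  have := hv u (Finset.mem_univ u)
  omega

theorem Nat.log_two_add_one_le_of_two_mul_le {m n : ℕ} (h : 2 * m ≤ n) (hn : 2 ≤ n) :
    Nat.log 2 m + 1 ≤ Nat.log 2 n := by
  have hm : Nat.log 2 m ≤ Nat.log 2 n - 1 := by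
    rw [← Nat.log_div_base]
    exact Nat.log_mono_right ((Nat.le_div_iff_mul_le two_pos).mpr (by omega))
  have := Nat.log_pos one_lt_two hn
  omega

namespace ClosedClasses

variable {k : ℕ}

namespace CMeasure

variable (ψ : CMeasure)

theorem ψ_nil : ψ.ψ [] = 0 := (ψ.pos []).mpr rfl

theorem ψ_le_of_subperm {w₁ w₂ : List ℕ} (h : w₁.Subperm w₂) :
    ψ.ψ w₁ ≤ ψ.ψ w₂ := by
  obtain ⟨w, hperm, hsub⟩ := h
  obtain ⟨w', hw'⟩ := hsub.exists_perm_append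
  rw [ψ.perm _ _ hperm.symm, ψ.perm _ _ hw']
  exact ψ.mono w w'

theorem setCost_mono {D E : Finset ℕ} (h : D ⊆ E) : ψ.setCost D ≤ ψ.setCost E :=
  ψ.ψ_le_of_subperm <| (D.sort_nodup _).subperm fun x hx => by
    simpa using h ((D.mem_sort _).mp hx)

end CMeasure

namespace Table

theorem separates_attrs (T : Table k) {r : ℕ → Fin (k + 2)} (hr : r ∈ T.rows) :
    T.Separates T.attrs r := by
  refine ⟨subset_rfl, fun r' hr' hne => ?_⟩
  obtain ⟨x, hx⟩ := Function.ne_iff.mp hne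
  by_cases hxa : x ∈ T.attrs
  · exact ⟨x, hxa, Ne.symm hx⟩
  · exact absurd ((T.supp r' hr' x hxa).trans (T.supp r hr x hxa).symm) hx

theorem exists_separates_setCost_eq_Spsirow (ψ : CMeasure) (T : Table k)
    {r : ℕ → Fin (k + 2)} (hr : r ∈ T.rows) :
    ∃ D, T.Separates D r ∧ ψ.setCost D = T.Spsirow ψ r :=
  Nat.sInf_mem (s := {m | ∃ D, T.Separates D r ∧ ψ.setCost D = m})
    ⟨_, T.attrs, T.separates_attrs hr, rfl⟩

theorem Spsirow_le_Wpsi (ψ : CMeasure) (T : Table k) {r : ℕ → Fin (k + 2)}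
    (hr : r ∈ T.rows) : T.Spsirow ψ r ≤ T.Wpsi ψ :=
  Nat.sInf_le ⟨T.attrs, T.separates_attrs hr, rfl⟩

theorem Spsi_le_Wpsi (ψ : CMeasure) (T : Table k) : T.Spsi ψ ≤ T.Wpsi ψ :=
  csSup_le' <| by
    rintro _ ⟨r, hr, rfl⟩
    exact T.Spsirow_le_Wpsi ψ hr

theorem Spsirow_le_Spsi (ψ : CMeasure) (T : Table k) {r : ℕ → Fin (k + 2)}
    (hr : r ∈ T.rows) : T.Spsirow ψ r ≤ T.Spsi ψ :=
  le_csSup ⟨T.Wpsi ψ, by rintro _ ⟨r', hr', rfl⟩; exact T.Spsirow_le_Wpsi ψ hr'⟩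
    ⟨r, hr, rfl⟩

end Table

theorem Spsi_le_Shatpsi (ψ : CMeasure) {T T' : Table k} (h : InClosure T' T) :
    T'.Spsi ψ ≤ Shatpsi ψ T := by
  refine le_csSup ⟨T.Wpsi ψ, ?_⟩ ⟨T', h, rfl⟩
  rintro _ ⟨T'', h'', rfl⟩
  exact (T''.Spsi_le_Wpsi ψ).trans (ψ.setCost_mono h''.1)

theorem Shatpsi_le_of_closedClass (ψ : CMeasure) {A : Set (Table k)} (hA : ClosedClass A)
    {a : ℕ} (hS : ∀ T ∈ A, T.Spsi ψ ≤ a) {T : Table k} (hT : T ∈ A) :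
    Shatpsi ψ T ≤ a :=
  csSup_le' <| by
    rintro _ ⟨T', h, rfl⟩
    exact hS T' (hA.2 T hT T' h)

open Classical in
/-- The decisions are irrelevant. -/
noncomputable def Table.restrictCols (T : Table k) (B : Finset ℕ) : Table k where
  attrs := B
  rows := T.rows.image (restrict B)
  dec := fun _ => true
  supp := by
    intro r hr a ha
    obtain ⟨r₀, -, rfl⟩ := Finset.mem_image.mp hr
    simp [restrict, ha]

theorem inClosure_restrictCols {T : Table k} {B : Finset ℕ} (hB : B ⊆ T.attrs) :
    InClosure (T.restrictCols B) T :=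
  ⟨hB, by simp [Table.restrictCols]⟩

/-- `D` separates the row `restrict B r` of `T.restrictCols B ∈ [T]`. -/
theorem exists_subset_forcing_agreement (ψ : CMeasure) {T : Table k} {B : Finset ℕ}
    (hB : B ⊆ T.attrs) {r : ℕ → Fin (k + 2)} (hr : r ∈ T.rows) :
    ∃ D ⊆ B, ψ.setCost D ≤ Shatpsi ψ T ∧
      ∀ r' ∈ T.rows, (∀ x ∈ D, r' x = r x) → ∀ x ∈ B, r' x = r x := by
  classical
  have hρ : restrict B r ∈ (T.restrictCols B).rows := Finset.mem_image.mpr ⟨r, hr, rfl⟩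
  obtain ⟨D, ⟨hDB, hsep⟩, hD⟩ :=
    (T.restrictCols B).exists_separates_setCost_eq_Spsirow ψ hρ
  refine ⟨D, hDB, ?_, fun r' hr' hagree x hx => ?_⟩
  · rw [hD]
    exact ((T.restrictCols B).Spsirow_le_Spsi ψ hρ).trans
      (Spsi_le_Shatpsi ψ (inClosure_restrictCols hB))
  · by_contra hne
    have hρ' : restrict B r' ≠ restrict B r := fun h =>
      hne (by simpa [restrict, hx] using congrFun h x)
    obtain ⟨y, hyD, hy⟩ := hsep _ (Finset.mem_image.mpr ⟨r', hr', rfl⟩) hρ'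
    exact hy (by simp [restrict, hagree y hyD])

theorem setCost_singleton_le_Shatpsi (ψ : CMeasure) {T : Table k} {x : ℕ} (hx : x ∈ T.attrs)
    {r r' : ℕ → Fin (k + 2)} (hr : r ∈ T.rows) (hr' : r' ∈ T.rows) (hne : r x ≠ r' x) :
    ψ.setCost {x} ≤ Shatpsi ψ T := by
  obtain ⟨D, hDx, hD, hforce⟩ :=
    exists_subset_forcing_agreement ψ (Finset.singleton_subset_iff.mpr hx) hr
  rcases Finset.subset_singleton_iff.mp hDx with rfl | rfl
  · exact absurd (hforce r' hr' (by simp) x (Finset.mem_singleton_self x)).symm hne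
  · exact hD

def IsFixation (T : Table k) (δ : ℕ → Fin (k + 2)) (p : List (ℕ × Fin (k + 2))) : Prop :=
  ∀ q ∈ p, q.1 ∈ T.attrs ∧ q.2 = δ q.1

def fixationWord (D : Finset ℕ) (δ : ℕ → Fin (k + 2)) : List (ℕ × Fin (k + 2)) :=
  (D.sort (· ≤ ·)).map fun x => (x, δ x)

@[simp]
theorem map_fst_fixationWord (D : Finset ℕ) (δ : ℕ → Fin (k + 2)) :
    (fixationWord D δ).map Prod.fst = D.sort (· ≤ ·) := by
  simp [fixationWord, Function.comp_def]

theorem ruleSat_fixationWord_iff {D : Finset ℕ} {δ r : ℕ → Fin (k + 2)} :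
    RuleSat (fixationWord D δ) r ↔ ∀ x ∈ D, r x = δ x := by
  simp [RuleSat, fixationWord]

theorem isFixation_fixationWord {T : Table k} {D : Finset ℕ} (hD : D ⊆ T.attrs)
    (δ : ℕ → Fin (k + 2)) : IsFixation T δ (fixationWord D δ) := by
  intro q hq
  obtain ⟨x, hx, rfl⟩ := List.mem_map.mp hq
  exact ⟨hD ((D.mem_sort _).mp hx), rfl⟩

theorem ruleSat_append_iff {p p' : List (ℕ × Fin (k + 2))} {r : ℕ → Fin (k + 2)} :
    RuleSat (p ++ p') r ↔ RuleSat p r ∧ RuleSat p' r := by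
  simp [RuleSat, or_imp, forall_and]

theorem exists_maximal_agreement_set (T : Table k) (hT : T.rows.Nonempty)
    (δ : ℕ → Fin (k + 2)) :
    ∃ B ⊆ T.attrs, (∃ r ∈ T.rows, ∀ x ∈ B, r x = δ x) ∧
      ∀ x ∈ T.attrs, x ∉ B → ∀ r ∈ T.rows, ¬ ∀ y ∈ insert x B, r y = δ y := by
  classical
  obtain ⟨r₀, hr₀⟩ := hT
  set P := T.attrs.powerset.filter fun B => ∃ r ∈ T.rows, ∀ x ∈ B, r x = δ x
  obtain ⟨B, hBP, hBmax⟩ := P.exists_max_image Finset.card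
    ⟨∅, Finset.mem_filter.mpr ⟨Finset.empty_mem_powerset _, r₀, hr₀, by simp⟩⟩
  obtain ⟨hBsub, hagree⟩ := Finset.mem_filter.mp hBP
  refine ⟨B, Finset.mem_powerset.mp hBsub, hagree, fun x hx hxB r hr hr' => ?_⟩
  have := hBmax (insert x B) <| Finset.mem_filter.mpr
    ⟨Finset.mem_powerset.mpr (Finset.insert_subset hx (Finset.mem_powerset.mp hBsub)),
      r, hr, hr'⟩
  rw [Finset.card_insert_of_notMem hxB] at this
  omega

/-- Take a maximal set `B` of attributes on which some row `r_B` agrees with `δ`, and a set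
`D ⊆ B` of cost at most `Ŝ_ψ(T)` on which agreement with `r_B` forces agreement on `B`.
Either the rows agreeing with `δ` on `B` carry one decision, or two of them differ at some
`x ∉ B`; then no row agrees with `δ` on `D ∪ {x}`, and `ψ(x) ≤ Ŝ_ψ(T)` as well. -/
theorem exists_fixation_le_two_mul_Shatpsi (ψ : CMeasure) (T : Table k)
    (δ : ℕ → Fin (k + 2)) :
    ∃ p, IsFixation T δ p ∧ FixConst T p ∧ ψ.ψ (p.map Prod.fst) ≤ 2 * Shatpsi ψ T := by
  rcases T.rows.eq_empty_or_nonempty with hE | hT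
  · exact ⟨[], by simp [IsFixation], by simp [FixConst, hE], by simp [ψ.ψ_nil]⟩
  obtain ⟨B, hBT, ⟨rB, hrB, hrBδ⟩, hBmax⟩ := exists_maximal_agreement_set T hT δ
  obtain ⟨D, hDB, hDcost, hforce⟩ := exists_subset_forcing_agreement ψ hBT hrB
  have hagreeB : ∀ r ∈ T.rows, RuleSat (fixationWord D δ) r → ∀ x ∈ B, r x = δ x := by
    intro r hr hsat x hx
    rw [← hrBδ x hx]
    refine hforce r hr (fun y hy => ?_) x hx
    rw [ruleSat_fixationWord_iff.mp hsat y hy, hrBδ y (hDB hy)]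
  have hfixD := isFixation_fixationWord (hDB.trans hBT) δ
  by_cases hconst : ∀ r ∈ T.rows, ∀ r' ∈ T.rows,
      (∀ x ∈ B, r x = δ x) → (∀ x ∈ B, r' x = δ x) → T.dec r = T.dec r'
  · refine ⟨fixationWord D δ, hfixD,
      fun r hr r' hr' hs hs' => hconst r hr r' hr' (hagreeB r hr hs) (hagreeB r' hr' hs'), ?_⟩
    rw [map_fst_fixationWord]
    exact hDcost.trans (by omega)
  push Not at hconst
  obtain ⟨r₁, hr₁, r₂, hr₂, hr₁δ, hr₂δ, hdec⟩ := hconst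
  obtain ⟨x, hx⟩ := Function.ne_iff.mp fun h : r₁ = r₂ => hdec (h ▸ rfl)
  have hxT : x ∈ T.attrs := by
    by_contra h
    exact hx ((T.supp r₁ hr₁ x h).trans (T.supp r₂ hr₂ x h).symm)
  have hxB : x ∉ B := fun h => hx ((hr₁δ x h).trans (hr₂δ x h).symm)
  refine ⟨fixationWord D δ ++ fixationWord {x} δ, ?_, ?_, ?_⟩
  · intro q hq
    rcases List.mem_append.mp hq with hq | hq
    · exact hfixD q hq
    · exact isFixation_fixationWord (Finset.singleton_subset_iff.mpr hxT) δ q hq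
  · intro r hr _ _ hs _
    obtain ⟨hsD, hsx⟩ := ruleSat_append_iff.mp hs
    refine absurd (fun y hy => ?_) (hBmax x hxT hxB r hr)
    rcases Finset.mem_insert.mp hy with rfl | hy
    · exact ruleSat_fixationWord_iff.mp hsx y (Finset.mem_singleton_self y)
    · exact hagreeB r hr hsD y hy
  · rw [List.map_append, map_fst_fixationWord, map_fst_fixationWord]
    have hψx := setCost_singleton_le_Shatpsi ψ hxT hr₁ hr₂ hx
    exact (ψ.subadd _ _).trans ((add_le_add hDcost hψx).trans_eq (two_mul _).symm)

theorem fixConst_fixationWord_attrs (T : Table k) (δ : ℕ → Fin (k + 2)) :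
    FixConst T (fixationWord T.attrs δ) := by
  intro r hr r' hr' hs hs'
  suffices r = r' by rw [this]
  funext x
  by_cases hx : x ∈ T.attrs
  · rw [ruleSat_fixationWord_iff.mp hs x hx, ruleSat_fixationWord_iff.mp hs' x hx]
  · rw [T.supp r hr x hx, T.supp r' hr' x hx]

theorem Mpsirow_le_of_fixation (ψ : CMeasure) {T : Table k} {δ : ℕ → Fin (k + 2)}
    {p : List (ℕ × Fin (k + 2))} (hfix : IsFixation T δ p) (hconst : FixConst T p) :
    Mpsirow ψ T δ ≤ ψ.ψ (p.map Prod.fst) :=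
  Nat.sInf_le ⟨p, hfix, hconst, rfl⟩

theorem Mpsirow_le_Wpsi (ψ : CMeasure) (T : Table k) (δ : ℕ → Fin (k + 2)) :
    Mpsirow ψ T δ ≤ T.Wpsi ψ := by
  simpa [Table.Wpsi, CMeasure.setCost] using
    Mpsirow_le_of_fixation ψ (isFixation_fixationWord subset_rfl δ)
    (fixConst_fixationWord_attrs T δ)

theorem exists_fixation_eq_Mpsirow (ψ : CMeasure) (T : Table k) (δ : ℕ → Fin (k + 2)) :
    ∃ p, IsFixation T δ p ∧ FixConst T p ∧ ψ.ψ (p.map Prod.fst) = Mpsirow ψ T δ :=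
  Nat.sInf_mem (s := {m | ∃ p, IsFixation T δ p ∧ FixConst T p ∧ ψ.ψ (p.map Prod.fst) = m})
    ⟨_, fixationWord T.attrs δ, isFixation_fixationWord subset_rfl δ,
      fixConst_fixationWord_attrs T δ, rfl⟩

theorem Mpsirow_le_Mpsi (ψ : CMeasure) (T : Table k) {δ : ℕ → Fin (k + 2)}
    (hδ : ∀ a ∉ T.attrs, δ a = 0) : Mpsirow ψ T δ ≤ Mpsi ψ T :=
  le_csSup ⟨T.Wpsi ψ, by rintro _ ⟨δ', -, rfl⟩; exact Mpsirow_le_Wpsi ψ T δ'⟩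
    ⟨δ, hδ, rfl⟩

/-- Only the values of `δ` on `P(T)` matter, so `M_ψ(T)` bounds every `M_ψ(T, δ)`. -/
theorem exists_fixation_le_Mpsi (ψ : CMeasure) (T : Table k) (δ : ℕ → Fin (k + 2)) :
    ∃ p, IsFixation T δ p ∧ FixConst T p ∧ ψ.ψ (p.map Prod.fst) ≤ Mpsi ψ T := by
  obtain ⟨p, hfix, hconst, hp⟩ := exists_fixation_eq_Mpsirow ψ T (restrict T.attrs δ)
  refine ⟨p, fun q hq => ?_, hconst, hp.trans_le (Mpsirow_le_Mpsi ψ T ?_)⟩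
  · obtain ⟨hqT, hqδ⟩ := hfix q hq
    exact ⟨hqT, by simpa [restrict, hqT] using hqδ⟩
  · intro a ha
    simp [restrict, ha]

theorem Mpsi_le_two_mul_Shatpsi (ψ : CMeasure) (T : Table k) : Mpsi ψ T ≤ 2 * Shatpsi ψ T :=
  csSup_le' <| by
    rintro _ ⟨δ, -, rfl⟩
    obtain ⟨p, hfix, hconst, hp⟩ := exists_fixation_le_two_mul_Shatpsi ψ T δ
    exact (Mpsirow_le_of_fixation ψ hfix hconst).trans hp

def IsDTOn (T : Table k) (C : Finset (ℕ → Fin (k + 2))) (Γ : DT k) : Prop :=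
  Γ.attrSet ⊆ T.attrs ∧ ∀ r ∈ C, Γ.eval r = T.dec r

theorem IsDTOn.mono {T : Table k} {C C' : Finset (ℕ → Fin (k + 2))} {Γ : DT k}
    (h : IsDTOn T C Γ) (hC : C' ⊆ C) : IsDTOn T C' Γ :=
  ⟨h.1, fun r hr => h.2 r (hC hr)⟩

theorem exists_isDTOn_leaf {T : Table k} {C : Finset (ℕ → Fin (k + 2))}
    (hC : ∀ r ∈ C, ∀ r' ∈ C, T.dec r = T.dec r') : ∃ b, IsDTOn T C (DT.leaf b) := by
  rcases C.eq_empty_or_nonempty with rfl | ⟨r₀, hr₀⟩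
  · exact ⟨true, by simp [IsDTOn, DT.attrSet]⟩
  · exact ⟨T.dec r₀, by simp [DT.attrSet], fun r hr => hC r₀ hr₀ r hr⟩

theorem IsDTOn.node {T : Table k} {C : Finset (ℕ → Fin (k + 2))} {x : ℕ}
    {ch : Fin (k + 2) → DT k} (hx : x ∈ T.attrs)
    (hch : ∀ u, IsDTOn T (C.filter (· x = u)) (ch u)) : IsDTOn T C (DT.node x ch) := by
  refine ⟨Finset.insert_subset hx fun y hy => ?_, fun r hr => ?_⟩
  · obtain ⟨u, -, hyu⟩ := Finset.mem_biUnion.mp hy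
    exact (hch u).1 hyu
  · exact (hch (r x)).2 r (Finset.mem_filter.mpr ⟨hr, rfl⟩)

/-- The tree queries the attributes of `s` in order and hands a deviation at `(x, v)` to the
given tree for the rows of `C` with another value at `x`; that tree starts from an accumulator
which is a sub-word of `s.map Prod.fst ++ w`. -/
theorem exists_isDTOn_of_word (ψ : CMeasure) {T : Table k} {c : ℕ} :
    ∀ (s : List (ℕ × Fin (k + 2))) (C : Finset (ℕ → Fin (k + 2))),
      (∀ q ∈ s, q.1 ∈ T.attrs) →
      (∀ r ∈ C, ∀ r' ∈ C, RuleSat s r → RuleSat s r' → T.dec r = T.dec r') →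
      (∀ q ∈ s, ∀ u ≠ q.2, ∃ Γ, IsDTOn T (C.filter (· q.1 = u)) Γ ∧
        ∀ w, Γ.cost ψ.ψ w ≤ ψ.ψ w + c) →
      ∃ Γ, IsDTOn T C Γ ∧ ∀ w, Γ.cost ψ.ψ w ≤ ψ.ψ (s.map Prod.fst ++ w) + c
  | [], C, _, hconst, _ => by
    obtain ⟨b, hb⟩ := exists_isDTOn_leaf fun r hr r' hr' =>
      hconst r hr r' hr' (by simp [RuleSat]) (by simp [RuleSat])
    exact ⟨DT.leaf b, hb, fun w => Nat.le_add_right _ _⟩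
  | (x, v) :: s, C, hattrs, hconst, hdev => by
    have hbranch : ∀ u, ∃ Γ, IsDTOn T (C.filter (· x = u)) Γ ∧
        ∀ w, Γ.cost ψ.ψ (x :: w) ≤ ψ.ψ (x :: (s.map Prod.fst ++ w)) + c := by
      intro u
      by_cases hu : u = v
      · subst hu
        obtain ⟨Γ, hΓ, hcost⟩ := exists_isDTOn_of_word ψ s (C.filter (· x = u))
          (fun q hq => hattrs q (List.mem_cons_of_mem _ hq))
          (fun r hr r' hr' hs hs' => by
            simp only [Finset.mem_filter] at hr hr'
            exact hconst r hr.1 r' hr'.1 (List.forall_mem_cons.mpr ⟨hr.2, hs⟩)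
              (List.forall_mem_cons.mpr ⟨hr'.2, hs'⟩))
          (fun q hq u' hu' => (hdev q (List.mem_cons_of_mem _ hq) u' hu').imp
            fun Γ hΓ => ⟨hΓ.1.mono (Finset.filter_subset_filter _ (Finset.filter_subset _ _)),
              hΓ.2⟩)
        refine ⟨Γ, hΓ, fun w => (hcost (x :: w)).trans_eq ?_⟩
        rw [ψ.perm _ _ List.perm_middle]
      · obtain ⟨Γ, hΓ, hcost⟩ := hdev (x, v) List.mem_cons_self u hu
        refine ⟨Γ, hΓ, fun w => (hcost (x :: w)).trans (Nat.add_le_add_right ?_ c)⟩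
        exact ψ.ψ_le_of_subperm ((List.sublist_append_right _ w).cons_cons x).subperm
    choose ch hch hcost using hbranch
    exact ⟨DT.node x ch, IsDTOn.node (hattrs (x, v) List.mem_cons_self) hch,
      fun w => Finset.sup_le fun u _ => hcost u w⟩

theorem exists_isDTOn_cost_le_mul_log (ψ : CMeasure) {T : Table k} {m : ℕ}
    (hM : ∀ δ, ∃ p, IsFixation T δ p ∧ FixConst T p ∧ ψ.ψ (p.map Prod.fst) ≤ m)
    (C : Finset (ℕ → Fin (k + 2))) (hC : C ⊆ T.rows) :
    ∃ Γ, IsDTOn T C Γ ∧ ∀ w, Γ.cost ψ.ψ w ≤ ψ.ψ w + m * Nat.log 2 C.card := by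
  induction C using Finset.strongInduction with
  | H C ih =>
  by_cases hconst : ∀ r ∈ C, ∀ r' ∈ C, T.dec r = T.dec r'
  · obtain ⟨b, hb⟩ := exists_isDTOn_leaf hconst
    exact ⟨DT.leaf b, hb, fun w => Nat.le_add_right _ _⟩
  push Not at hconst
  obtain ⟨r₁, hr₁, r₂, hr₂, hdec⟩ := hconst
  have hC2 : 2 ≤ C.card :=
    Finset.one_lt_card.mpr ⟨r₁, hr₁, r₂, hr₂, fun h => hdec (h ▸ rfl)⟩
  choose δ hδ using fun x => C.exists_forall_ne_two_mul_card_filter_le (· x)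
  obtain ⟨p, hfix, hpconst, hp⟩ := hM δ
  have hdev : ∀ q ∈ p, ∀ u ≠ q.2, ∃ Γ, IsDTOn T (C.filter (· q.1 = u)) Γ ∧
      ∀ w, Γ.cost ψ.ψ w ≤ ψ.ψ w + m * (Nat.log 2 C.card - 1) := by
    intro q hq u hu
    have hhalf := hδ q.1 u ((hfix q hq).2 ▸ hu)
    have hssub : C.filter (· q.1 = u) ⊂ C :=
      Finset.ssubset_iff_subset_ne.mpr ⟨Finset.filter_subset _ _, fun h => by
        rw [h] at hhalf
        omega⟩
    obtain ⟨Γ, hΓ, hcost⟩ := ih _ hssub ((Finset.filter_subset _ _).trans hC)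
    refine ⟨Γ, hΓ, fun w =>
      (hcost w).trans (Nat.add_le_add_left (Nat.mul_le_mul_left m ?_) _)⟩
    have := Nat.log_two_add_one_le_of_two_mul_le hhalf hC2
    omega
  obtain ⟨Γ, hΓ, hcost⟩ := exists_isDTOn_of_word ψ p C (fun q hq => (hfix q hq).1)
    (fun r hr r' hr' => hpconst r (hC hr) r' (hC hr')) hdev
  refine ⟨Γ, hΓ, fun w => (hcost w).trans ?_⟩
  have hlog := Nat.log_pos one_lt_two hC2
  calc ψ.ψ (p.map Prod.fst ++ w) + m * (Nat.log 2 C.card - 1)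
      ≤ ψ.ψ w + (m + m * (Nat.log 2 C.card - 1)) := by
        have := ψ.subadd (p.map Prod.fst) w
        omega
    _ = ψ.ψ w + m * Nat.log 2 C.card := by
        rw [add_comm m, ← Nat.mul_add_one, Nat.sub_add_cancel hlog]

theorem psid_le_mul_log (ψ : CMeasure) {T : Table k} {m : ℕ}
    (hM : ∀ δ, ∃ p, IsFixation T δ p ∧ FixConst T p ∧ ψ.ψ (p.map Prod.fst) ≤ m) :
    psid ψ.ψ T ≤ m * Nat.log 2 T.N := by
  obtain ⟨Γ, hΓ, hcost⟩ := exists_isDTOn_cost_le_mul_log ψ hM T.rows subset_rfl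
  calc psid ψ.ψ T ≤ Γ.cost ψ.ψ [] := Nat.sInf_le ⟨Γ, hΓ, rfl⟩
    _ ≤ m * Nat.log 2 T.N := by simpa [ψ.ψ_nil, Table.N] using hcost []

theorem psid_le_Mpsi_mul_log (ψ : CMeasure) (T : Table k) :
    psid ψ.ψ T ≤ Mpsi ψ T * Nat.log 2 T.N :=
  psid_le_mul_log ψ (exists_fixation_le_Mpsi ψ T)

end ClosedClasses

theorem psid_bounded_on_class_general (k : ℕ) (ψ : CMeasure)
    (A : Set (Table k)) (hA : ClosedClass A) (a b : ℕ)
    (hS : ∀ T ∈ A, T.Spsi ψ ≤ a) (hN : ∀ T ∈ A, T.N ≤ b) :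
    ∀ T ∈ A, (psid ψ.ψ T : ℝ) ≤ 2 * (a : ℝ) * Real.logb 2 (b : ℝ) := by
  intro T hT
  have hM : Mpsi ψ T ≤ 2 * a := (Mpsi_le_two_mul_Shatpsi ψ T).trans
    (Nat.mul_le_mul_left 2 (Shatpsi_le_of_closedClass ψ hA hS hT))
  have hpsid : psid ψ.ψ T ≤ 2 * a * Nat.log 2 b :=
    (psid_le_Mpsi_mul_log ψ T).trans (Nat.mul_le_mul hM (Nat.log_mono_right (hN T hT)))
  calc (psid ψ.ψ T : ℝ) ≤ 2 * a * (Nat.log 2 b : ℝ) := by exact_mod_cast hpsid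
    _ ≤ 2 * a * Real.logb 2 b := by
      gcongr
      exact_mod_cast Real.natLog_le_logb b 2

/-- Theorem 1(a): if `S_ψ ≤ a` and `N ≤ b` on a nonempty closed
class `A`, then `ψ^d(T) ≤ 2a·log₂ b` for every `T ∈ A`; in particular the
functions `F^W_{ψ,A}` and `F^Θ_{ψ,A}` are bounded by this constant. -/
theorem psid_bounded_on_class (k : ℕ) (ψ : CMeasure) (hb : ψ.Bounded)
    (A : Set (Table k)) (hA : ClosedClass A) (a b : ℕ)
    (hS : ∀ T ∈ A, T.Spsi ψ ≤ a) (hN : ∀ T ∈ A, T.N ≤ b) :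
    ∀ T ∈ A, (psid ψ.ψ T : ℝ) ≤ 2 * (a : ℝ) * Real.logb 2 (b : ℝ) :=
  psid_bounded_on_class_general k ψ A hA a b hS hN
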